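/- Let p ≥ 1 be an odd integer and let (ρ₁, ρ₋₁, c) be an admissible representation of f : ℝ → ℝ. Then, with L₋ = lim_{x→−∞} f^{(p)}(x) and L₊ = lim_{x→+∞} f^{(p)}(x) (which exist), one has ∫_ℝ ( |ρ₁(b)| + |ρ₋₁(b)| )/ψ(b) db ≥ max( (1/p!)·∫_ℝ |f^{(p+1)}(b)| db , (1/p!)·|L₋ + L₊| ). -/

import Mathlib

open MeasureTheory Filter

/-- The RePU activation `[t]₊^p = max(t,0)^p`. -/
noncomputable def repu (p : ℕ) (t : ℝ) : ℝ := (max t 0) ^ p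

/-- The weight `ψ(b) = 1 + |b|^{p-1}`. -/
noncomputable def ψ (p : ℕ) (b : ℝ) : ℝ := 1 + |b| ^ (p - 1)

/-- An admissible representation of `f : ℝ → ℝ`: a pair of continuous densities
`ρ₁, ρ₋₁` decaying like `1/(1+|b|^{p+2})` and a constant `c` with
`f(x) = ∫ (ρ₁(b)([x−b]₊^p − [−b]₊^p) + ρ₋₁(b)([b−x]₊^p − [b]₊^p))/ψ(b) db + c`. -/
def IsAdmissibleRep (p : ℕ) (f ρ₁ ρ₂ : ℝ → ℝ) (c : ℝ) : Prop :=
  Continuous ρ₁ ∧ Continuous ρ₂ ∧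
  (∃ C > 0, ∀ b : ℝ, |ρ₁ b| ≤ C / (1 + |b| ^ (p + 2)) ∧ |ρ₂ b| ≤ C / (1 + |b| ^ (p + 2))) ∧
  ∀ x : ℝ, f x = (∫ b : ℝ,
      (ρ₁ b * (repu p (x - b) - repu p (-b)) + ρ₂ b * (repu p (b - x) - repu p b)) / ψ p b) + c



section AuxStmt12
open Set

lemma psi_ge_one (p : ℕ) (b : ℝ) : (1:ℝ) ≤ ψ p b := by
  have : (0:ℝ) ≤ |b| ^ (p-1) := by positivity
  unfold ψ; linarith

lemma psi_pos (p : ℕ) (b : ℝ) : (0:ℝ) < ψ p b := lt_of_lt_of_le one_pos (psi_ge_one p b)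

lemma continuous_psi (p : ℕ) : Continuous (ψ p) := by
  unfold ψ; fun_prop

lemma continuous_repu (k : ℕ) : Continuous (repu k) := by
  unfold repu; fun_prop

lemma repu_nonneg (k : ℕ) (t : ℝ) : 0 ≤ repu k t := by
  unfold repu; positivity

lemma repu_le_abs_pow (k : ℕ) (t : ℝ) : repu k t ≤ |t| ^ k := by
  unfold repu
  exact pow_le_pow_left₀ (le_max_right t 0) (max_le (le_abs_self t) (abs_nonneg t)) k

lemma abs_repu_le (k : ℕ) (t : ℝ) : |repu k t| ≤ |t| ^ k := by
  rw [abs_of_nonneg (repu_nonneg k t)]; exact repu_le_abs_pow k t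

lemma decay_key (p : ℕ) (b : ℝ) :
    (1+|b|)^p / (1+|b|^(p+2)) ≤ 2^(p+1) / (1+b^2) := by
  have h1 : (0:ℝ) < 1 + |b|^(p+2) := by positivity
  have h2 : (0:ℝ) < 1 + b^2 := by positivity
  rw [div_le_div_iff₀ h1 h2]
  have hsq : |b|^2 = b^2 := sq_abs b
  rcases le_or_gt |b| 1 with h | h
  · have e1 : (1+|b|)^p ≤ 2^p :=
      pow_le_pow_left₀ (by positivity : (0:ℝ) ≤ 1+|b|) (by linarith : 1+|b| ≤ 2) p
    have e2 : b^2 ≤ 1 := by nlinarith [abs_nonneg b]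
    have e3 : (0:ℝ) ≤ |b|^(p+2) := by positivity
    calc (1+|b|)^p * (1+b^2) ≤ 2^p * 2 :=
          mul_le_mul e1 (by linarith) (by positivity) (by positivity)
      _ = 2^(p+1) := by ring
      _ ≤ 2^(p+1) * (1 + |b|^(p+2)) := le_mul_of_one_le_right (by positivity) (by linarith)
  · have e1 : (1+|b|)^p ≤ 2^p * |b|^p := by
      calc (1+|b|)^p ≤ (2*|b|)^p :=
            pow_le_pow_left₀ (by positivity : (0:ℝ) ≤ 1+|b|) (by linarith : 1+|b| ≤ 2*|b|) p
      _ = 2^p * |b|^p := mul_pow 2 |b| p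
    have e2 : 1 + b^2 ≤ 2 * b^2 := by nlinarith
    have e5 : |b|^(p+2) = |b|^p * b^2 := by rw [pow_add, hsq]
    calc (1+|b|)^p * (1+b^2) ≤ (2^p * |b|^p) * (2*b^2) := by
          apply mul_le_mul e1 e2 (by positivity) (by positivity)
      _ = 2^(p+1) * (|b|^p * b^2) := by ring
      _ ≤ 2^(p+1) * (1 + |b|^(p+2)) := by
          rw [e5]; have h2p : (0:ℝ) < (2:ℝ)^(p+1) := by positivity
          nlinarith [pow_nonneg (abs_nonneg b) p, sq_nonneg b]

lemma integrable_master (p : ℕ) (K : ℝ) {h : ℝ → ℝ}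
    (hm : AEStronglyMeasurable h (volume : Measure ℝ))
    (hb : ∀ b : ℝ, |h b| ≤ K * ((1+|b|)^p / (1+|b|^(p+2)))) : Integrable h := by
  have hK : 0 ≤ K := by
    have h0 := (abs_nonneg (h 0)).trans (hb 0)
    have : |(0:ℝ)| = 0 := abs_zero
    rw [this] at h0
    have hz : (0:ℝ)^(p+2) = 0 := zero_pow (by omega)
    rw [hz] at h0; norm_num at h0; exact h0
  refine (integrable_inv_one_add_sq.const_mul (K * 2^(p+1))).mono' hm ?_
  filter_upwards with b
  have h1 := (hb b).trans (mul_le_mul_of_nonneg_left (decay_key p b) hK)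
  calc ‖h b‖ = |h b| := rfl
    _ ≤ K * (2^(p+1) / (1+b^2)) := h1
    _ = K * 2^(p+1) * (1+b^2)⁻¹ := by ring

noncomputable def Gint (p : ℕ) (ρ₁ ρ₂ : ℝ → ℝ) (k : ℕ) (σ : ℝ) (x : ℝ) : ℝ :=
  ∫ b : ℝ, (ρ₁ b * repu k (x - b) + σ * (ρ₂ b * repu k (b - x))) / ψ p b

lemma abs_sub_le_abs_add_abs' (u v : ℝ) : |u - v| ≤ |u| + |v| := by
  calc |u - v| = |u + -v| := by rw [sub_eq_add_neg]
    _ ≤ |u| + |-v| := abs_add_le _ _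
    _ = |u| + |v| := by rw [abs_neg]

lemma repu_poly_le {p k : ℕ} (hk : k ≤ p) (x b t : ℝ) (ht : |t| ≤ |x| + |b|) :
    repu k t ≤ (1+|x|)^p * (1+|b|)^p := by
  have hx : (1:ℝ) ≤ 1 + |x| := by have := abs_nonneg x; linarith
  have hb : (1:ℝ) ≤ 1 + |b| := by have := abs_nonneg b; linarith
  calc repu k t ≤ |t|^k := repu_le_abs_pow k t
    _ ≤ ((1+|x|)*(1+|b|))^k := by
        apply pow_le_pow_left₀ (abs_nonneg t)
        nlinarith [abs_nonneg x, abs_nonneg b, mul_nonneg (abs_nonneg x) (abs_nonneg b)]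
    _ = (1+|x|)^k * (1+|b|)^k := mul_pow _ _ _
    _ ≤ (1+|x|)^p * (1+|b|)^p :=
        mul_le_mul (pow_le_pow_right₀ hx hk) (pow_le_pow_right₀ hb hk)
          (by positivity) (by positivity)

lemma integrand_abs_le {p : ℕ} {ρ₁ ρ₂ : ℝ → ℝ} {C : ℝ}
    (hC : ∀ b : ℝ, |ρ₁ b| ≤ C / (1 + |b| ^ (p + 2)) ∧ |ρ₂ b| ≤ C / (1 + |b| ^ (p + 2)))
    {k : ℕ} (hk : k ≤ p) (σ x b : ℝ) :
    |(ρ₁ b * repu k (x - b) + σ * (ρ₂ b * repu k (b - x))) / ψ p b|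
      ≤ ((1+|σ|) * C * (1+|x|)^p) * ((1+|b|)^p / (1+|b|^(p+2))) := by
  have h1 := (hC b).1
  have h2 := (hC b).2
  have hC0 : 0 ≤ C / (1 + |b| ^ (p + 2)) := le_trans (abs_nonneg _) h1
  have hr1 : |repu k (x-b)| ≤ (1+|x|)^p*(1+|b|)^p := by
    rw [abs_of_nonneg (repu_nonneg k _)]
    exact repu_poly_le hk x b _ (abs_sub_le_abs_add_abs' x b)
  have hr2 : |repu k (b-x)| ≤ (1+|x|)^p*(1+|b|)^p := by
    rw [abs_of_nonneg (repu_nonneg k _)]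
    refine repu_poly_le hk x b _ ?_
    calc |b - x| ≤ |b| + |x| := abs_sub_le_abs_add_abs' b x
      _ = |x| + |b| := by ring
  have hnum : |ρ₁ b * repu k (x - b) + σ * (ρ₂ b * repu k (b - x))|
      ≤ (1+|σ|) * (C / (1 + |b| ^ (p + 2))) * ((1+|x|)^p*(1+|b|)^p) := by
    calc |ρ₁ b * repu k (x - b) + σ * (ρ₂ b * repu k (b - x))|
        ≤ |ρ₁ b * repu k (x - b)| + |σ * (ρ₂ b * repu k (b - x))| := abs_add_le _ _
      _ = |ρ₁ b| * |repu k (x-b)| + |σ| * (|ρ₂ b| * |repu k (b-x)|) := by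
          rw [abs_mul, abs_mul, abs_mul]
      _ ≤ (C / (1 + |b| ^ (p + 2))) * ((1+|x|)^p*(1+|b|)^p)
          + |σ| * ((C / (1 + |b| ^ (p + 2))) * ((1+|x|)^p*(1+|b|)^p)) := by
          refine add_le_add (mul_le_mul h1 hr1 (abs_nonneg _) hC0) ?_
          exact mul_le_mul_of_nonneg_left (mul_le_mul h2 hr2 (abs_nonneg _) hC0) (abs_nonneg σ)
      _ = (1+|σ|) * (C / (1 + |b| ^ (p + 2))) * ((1+|x|)^p*(1+|b|)^p) := by ring
  calc |(ρ₁ b * repu k (x - b) + σ * (ρ₂ b * repu k (b - x))) / ψ p b|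
      = |ρ₁ b * repu k (x - b) + σ * (ρ₂ b * repu k (b - x))| / ψ p b := by
        rw [abs_div, abs_of_pos (psi_pos p b)]
    _ ≤ |ρ₁ b * repu k (x - b) + σ * (ρ₂ b * repu k (b - x))| :=
        div_le_self (abs_nonneg _) (psi_ge_one p b)
    _ ≤ (1+|σ|) * (C / (1 + |b| ^ (p + 2))) * ((1+|x|)^p*(1+|b|)^p) := hnum
    _ = ((1+|σ|) * C * (1+|x|)^p) * ((1+|b|)^p / (1+|b|^(p+2))) := by ring

lemma continuous_integrand {p : ℕ} {ρ₁ ρ₂ : ℝ → ℝ} (hρ₁ : Continuous ρ₁) (hρ₂ : Continuous ρ₂)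
    (k : ℕ) (σ x : ℝ) :
    Continuous fun b => (ρ₁ b * repu k (x - b) + σ * (ρ₂ b * repu k (b - x))) / ψ p b := by
  refine Continuous.div ?_ (continuous_psi p) (fun b => (psi_pos p b).ne')
  exact (hρ₁.mul ((continuous_repu k).comp (continuous_const.sub continuous_id))).add
    (continuous_const.mul (hρ₂.mul ((continuous_repu k).comp (continuous_id.sub continuous_const))))

lemma integrable_integrand {p : ℕ} {ρ₁ ρ₂ : ℝ → ℝ} {C : ℝ}
    (hρ₁ : Continuous ρ₁) (hρ₂ : Continuous ρ₂)
    (hC : ∀ b : ℝ, |ρ₁ b| ≤ C / (1 + |b| ^ (p + 2)) ∧ |ρ₂ b| ≤ C / (1 + |b| ^ (p + 2)))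
    {k : ℕ} (hk : k ≤ p) (σ x : ℝ) :
    Integrable fun b => (ρ₁ b * repu k (x - b) + σ * (ρ₂ b * repu k (b - x))) / ψ p b :=
  integrable_master p ((1+|σ|) * C * (1+|x|)^p)
    (continuous_integrand hρ₁ hρ₂ k σ x).aestronglyMeasurable
    (fun b => integrand_abs_le hC hk σ x b)

lemma integrable_ratio (p : ℕ) (K : ℝ) :
    Integrable fun b : ℝ => K * ((1+|b|)^p / (1+|b|^(p+2))) := by
  refine integrable_master p |K| ?_ ?_
  · refine (continuous_const.mul (Continuous.div (by fun_prop) (by fun_prop)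
      (fun b => by positivity))).aestronglyMeasurable
  · intro b
    rw [abs_mul, abs_of_nonneg (by positivity : (0:ℝ) ≤ (1+|b|)^p / (1+|b|^(p+2)))]

lemma hasDerivAt_repu (k : ℕ) (hk : 1 ≤ k) (t : ℝ) :
    HasDerivAt (repu (k+1)) (((k:ℝ)+1) * repu k t) t := by
  rcases lt_trichotomy t 0 with ht | rfl | ht
  · have hev : repu (k+1) =ᶠ[nhds t] (fun _ : ℝ => (0:ℝ)) := by
      filter_upwards [Iio_mem_nhds ht] with s hs
      have hs' : s < 0 := Set.mem_Iio.mp hs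
      simp [repu, max_eq_right hs'.le, zero_pow (by omega : k + 1 ≠ 0)]
    have h0 : HasDerivAt (repu (k+1)) 0 t :=
      (hasDerivAt_const t (0:ℝ)).congr_of_eventuallyEq hev
    convert h0 using 1
    simp [repu, max_eq_right ht.le, zero_pow (by omega : k ≠ 0)]
  · have hval : ((k:ℝ)+1) * repu k 0 = 0 := by
      simp [repu, zero_pow (by omega : k ≠ 0)]
    rw [hval, hasDerivAt_iff_tendsto_slope]
    have hg : Filter.Tendsto (fun x : ℝ => |x|^k) (nhdsWithin (0:ℝ) {(0:ℝ)}ᶜ) (nhds 0) := by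
      have h := (continuous_abs.pow k).tendsto (0:ℝ)
      have h2 : (|(0:ℝ)|)^k = 0 := by simp [zero_pow (by omega : k ≠ 0)]
      change Tendsto (fun x : ℝ => |x|^k) (nhds 0) (nhds (|(0:ℝ)|^k)) at h
      rw [h2] at h
      exact h.mono_left nhdsWithin_le_nhds
    refine squeeze_zero_norm (fun x => ?_) hg
    rcases eq_or_ne x 0 with rfl | hx
    · have h0 : slope (repu (k+1)) 0 0 = 0 := by simp [slope]
      rw [h0, norm_zero]
      positivity
    · rw [slope_def_field]
      have e0 : repu (k+1) 0 = 0 := by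
        simp [repu, zero_pow (by omega : k + 1 ≠ 0)]
      rw [e0, sub_zero, sub_zero]
      have hxpos : (0:ℝ) < |x| := abs_pos.mpr hx
      calc ‖repu (k+1) x / x‖ = |repu (k+1) x| / |x| := by
            rw [Real.norm_eq_abs, abs_div]
        _ ≤ |x|^(k+1) / |x| := by gcongr; exact abs_repu_le (k+1) x
        _ = |x|^k := by rw [pow_succ, mul_div_assoc, div_self hxpos.ne', mul_one]
  · have hev : repu (k+1) =ᶠ[nhds t] (fun s : ℝ => s^(k+1)) := by
      filter_upwards [Ioi_mem_nhds ht] with s hs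
      have hs' : 0 < s := Set.mem_Ioi.mp hs
      simp [repu, max_eq_left hs'.le]
    have h0 : HasDerivAt (fun s : ℝ => s^(k+1)) (((k:ℝ)+1) * t^k) t := by
      have h := hasDerivAt_pow (k+1) t
      simp only [Nat.add_sub_cancel] at h
      exact h.congr_deriv (by norm_cast)
    have h1 := h0.congr_of_eventuallyEq hev
    exact h1.congr_deriv (by rw [show repu k t = t^k from by simp [repu, max_eq_left ht.le]])

lemma norm_cast_add_one (k : ℕ) : (0:ℝ) ≤ (k:ℝ)+1 := by positivity

lemma hasDerivAt_Gint {p : ℕ} {ρ₁ ρ₂ : ℝ → ℝ} {C : ℝ} (hρ₁ : Continuous ρ₁) (hρ₂ : Continuous ρ₂)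
    (hC : ∀ b : ℝ, |ρ₁ b| ≤ C / (1 + |b| ^ (p + 2)) ∧ |ρ₂ b| ≤ C / (1 + |b| ^ (p + 2)))
    {k : ℕ} (hk1 : 1 ≤ k) (hkp : k + 1 ≤ p) (σ : ℝ) (x₀ : ℝ) :
    HasDerivAt (Gint p ρ₁ ρ₂ (k+1) σ) (((k:ℝ)+1) * Gint p ρ₁ ρ₂ k (-σ) x₀) x₀ := by
  have hkk : k ≤ p := by omega
  have main := hasDerivAt_integral_of_dominated_loc_of_deriv_le (μ := (volume : MeasureTheory.Measure ℝ))
    (F := fun x b => (ρ₁ b * repu (k+1) (x - b) + σ * (ρ₂ b * repu (k+1) (b - x))) / ψ p b)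
    (F' := fun x b => ((k:ℝ)+1) * ((ρ₁ b * repu k (x - b) + (-σ) * (ρ₂ b * repu k (b - x))) / ψ p b))
    (bound := fun b => (((k:ℝ)+1) * ((1+|σ|) * C * (2+|x₀|)^p)) * ((1+|b|)^p / (1+|b|^(p+2))))
    (Metric.ball_mem_nhds x₀ one_pos)
    (Filter.Eventually.of_forall fun x => (continuous_integrand hρ₁ hρ₂ (k+1) σ x).aestronglyMeasurable)
    (integrable_integrand hρ₁ hρ₂ hC hkp σ x₀)
    ((continuous_const.mul (continuous_integrand hρ₁ hρ₂ k (-σ) x₀)).aestronglyMeasurable)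
    ?_ (integrable_ratio p _) ?_
  · have hval : (∫ b : ℝ, ((k:ℝ)+1) * ((ρ₁ b * repu k (x₀ - b) + (-σ) * (ρ₂ b * repu k (b - x₀))) / ψ p b))
        = ((k:ℝ)+1) * Gint p ρ₁ ρ₂ k (-σ) x₀ := by
      unfold Gint
      exact integral_const_mul _ _
    have h2 := main.2
    rw [hval] at h2
    exact h2
  · -- bound
    refine Filter.Eventually.of_forall fun b => fun x hx => ?_
    have hxx : |x| ≤ |x₀| + 1 := by
      have := Metric.mem_ball.mp hx
      rw [Real.dist_eq] at this
      have h1 := abs_sub_abs_le_abs_sub x x₀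
      linarith
    have hpow : (1+|x|)^p ≤ (2+|x₀|)^p :=
      pow_le_pow_left₀ (by positivity) (by linarith) p
    have hC0 : 0 ≤ C := by
      have h0 := (abs_nonneg (ρ₁ 0)).trans (hC 0).1
      have hz : |(0:ℝ)|^(p+2) = 0 := by
        simp [zero_pow (by omega : p + 2 ≠ 0)]
      rw [hz] at h0
      norm_num at h0
      exact h0
    have key : (1+|σ|) * C * (1+|x|)^p ≤ (1+|σ|) * C * (2+|x₀|)^p := by
      apply mul_le_mul_of_nonneg_left hpow (by positivity)
    have hratio : (0:ℝ) ≤ (1+|b|)^p / (1+|b|^(p+2)) := by positivity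
    calc ‖((k:ℝ)+1) * ((ρ₁ b * repu k (x - b) + (-σ) * (ρ₂ b * repu k (b - x))) / ψ p b)‖
        = ((k:ℝ)+1) * |(ρ₁ b * repu k (x - b) + (-σ) * (ρ₂ b * repu k (b - x))) / ψ p b| := by
          rw [Real.norm_eq_abs, abs_mul, abs_of_nonneg (norm_cast_add_one k)]
      _ ≤ ((k:ℝ)+1) * (((1+|(-σ)|) * C * (1+|x|)^p) * ((1+|b|)^p / (1+|b|^(p+2)))) := by
          exact mul_le_mul_of_nonneg_left (integrand_abs_le hC hkk (-σ) x b) (norm_cast_add_one k)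
      _ = (((k:ℝ)+1) * ((1+|σ|) * C * (1+|x|)^p)) * ((1+|b|)^p / (1+|b|^(p+2))) := by
          rw [abs_neg]; ring
      _ ≤ (((k:ℝ)+1) * ((1+|σ|) * C * (2+|x₀|)^p)) * ((1+|b|)^p / (1+|b|^(p+2))) := by
          apply mul_le_mul_of_nonneg_right _ hratio
          exact mul_le_mul_of_nonneg_left key (norm_cast_add_one k)
  · -- differentiability
    refine Filter.Eventually.of_forall fun b => fun x _ => ?_
    have h1 : HasDerivAt (fun x => repu (k+1) (x - b)) (((k:ℝ)+1) * repu k (x-b)) x := by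
      have h := (hasDerivAt_repu k hk1 (x-b)).comp x ((hasDerivAt_id x).sub_const b)
      exact h.congr_deriv (by ring)
    have h2 : HasDerivAt (fun x => repu (k+1) (b - x)) (-(((k:ℝ)+1) * repu k (b-x))) x := by
      have h := (hasDerivAt_repu k hk1 (b-x)).comp x ((hasDerivAt_const x b).sub (hasDerivAt_id x))
      exact h.congr_deriv (by ring)
    have h3 := (((h1.const_mul (ρ₁ b))).add ((h2.const_mul (ρ₂ b)).const_mul σ)).div_const (ψ p b)
    exact h3.congr_deriv (by ring)

lemma C_nonneg {p : ℕ} {ρ : ℝ → ℝ} {C : ℝ}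
    (hCρ : ∀ b : ℝ, |ρ b| ≤ C / (1 + |b| ^ (p + 2))) : 0 ≤ C := by
  have hD : (0:ℝ) < 1 + |(0:ℝ)|^(p+2) := by positivity
  have h1 : 0 ≤ C / (1+|(0:ℝ)|^(p+2)) := le_trans (abs_nonneg _) (hCρ 0)
  calc (0:ℝ) ≤ C / (1+|(0:ℝ)|^(p+2)) * (1+|(0:ℝ)|^(p+2)) := mul_nonneg h1 hD.le
    _ = C := div_mul_cancel₀ C hD.ne'

lemma rho_bound {p : ℕ} {ρ : ℝ → ℝ} {C : ℝ}
    (hCρ : ∀ b : ℝ, |ρ b| ≤ C / (1 + |b| ^ (p + 2))) (b : ℝ) :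
    |ρ b| ≤ C * ((1+|b|)^p / (1+|b|^(p+2))) := by
  have hD : (0:ℝ) < 1 + |b|^(p+2) := by positivity
  have hC0 : 0 ≤ C := C_nonneg hCρ
  calc |ρ b| ≤ C / (1 + |b|^(p+2)) := hCρ b
    _ = C * (1 / (1 + |b|^(p+2))) := by ring
    _ ≤ C * ((1+|b|)^p / (1+|b|^(p+2))) := by
        gcongr
        exact one_le_pow₀ (by linarith [abs_nonneg b])

lemma integrable_rho {p : ℕ} {ρ : ℝ → ℝ} {C : ℝ} (hρ : Continuous ρ)
    (hCρ : ∀ b : ℝ, |ρ b| ≤ C / (1 + |b| ^ (p + 2))) :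
    MeasureTheory.Integrable ρ :=
  integrable_master p C hρ.aestronglyMeasurable (rho_bound hCρ)

lemma integrable_rho_div {p : ℕ} {ρ : ℝ → ℝ} {C : ℝ} (hρ : Continuous ρ)
    (hCρ : ∀ b : ℝ, |ρ b| ≤ C / (1 + |b| ^ (p + 2))) :
    MeasureTheory.Integrable (fun b => ρ b / ψ p b) := by
  refine integrable_master p C
    ((hρ.div (continuous_psi p) (fun b => (psi_pos p b).ne')).aestronglyMeasurable) (fun b => ?_)
  calc |ρ b / ψ p b| = |ρ b| / ψ p b := by rw [abs_div, abs_of_pos (psi_pos p b)]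
    _ ≤ |ρ b| := div_le_self (abs_nonneg _) (psi_ge_one p b)
    _ ≤ C * ((1+|b|)^p / (1+|b|^(p+2))) := rho_bound hCρ b

lemma hasDerivAt_Gint_one {p : ℕ} {ρ₁ ρ₂ : ℝ → ℝ} {C : ℝ} (hp : 1 ≤ p)
    (hρ₁ : Continuous ρ₁) (hρ₂ : Continuous ρ₂)
    (hC : ∀ b : ℝ, |ρ₁ b| ≤ C / (1 + |b| ^ (p + 2)) ∧ |ρ₂ b| ≤ C / (1 + |b| ^ (p + 2)))
    (x₀ : ℝ) :
    HasDerivAt (Gint p ρ₁ ρ₂ 1 1)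
      ((∫ b in Set.Iio x₀, ρ₁ b / ψ p b) - ∫ b in Set.Ioi x₀, ρ₂ b / ψ p b) x₀ := by
  have hI1 : MeasureTheory.Integrable (fun b => ρ₁ b / ψ p b) :=
    integrable_rho_div hρ₁ (fun b => (hC b).1)
  have hI2 : MeasureTheory.Integrable (fun b => ρ₂ b / ψ p b) :=
    integrable_rho_div hρ₂ (fun b => (hC b).2)
  have main := hasDerivAt_integral_of_dominated_loc_of_lip
    (μ := (volume : MeasureTheory.Measure ℝ))
    (F := fun x b => (ρ₁ b * repu 1 (x - b) + 1 * (ρ₂ b * repu 1 (b - x))) / ψ p b)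
    (F' := fun b => Set.indicator (Set.Iio x₀) (fun b => ρ₁ b / ψ p b) b
      - Set.indicator (Set.Ioi x₀) (fun b => ρ₂ b / ψ p b) b)
    (bound := fun b => |ρ₁ b| + |ρ₂ b|)
    (Metric.ball_mem_nhds x₀ one_pos)
    (Filter.Eventually.of_forall fun x => (continuous_integrand hρ₁ hρ₂ 1 1 x).aestronglyMeasurable)
    (integrable_integrand hρ₁ hρ₂ hC hp 1 x₀)
    ((hI1.aestronglyMeasurable.indicator measurableSet_Iio).sub
      (hI2.aestronglyMeasurable.indicator measurableSet_Ioi))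
    ?_ ((integrable_rho hρ₁ fun b => (hC b).1).abs.add (integrable_rho hρ₂ fun b => (hC b).2).abs)
    ?_
  · have hval : (∫ b : ℝ, (Set.indicator (Set.Iio x₀) (fun b => ρ₁ b / ψ p b) b
        - Set.indicator (Set.Ioi x₀) (fun b => ρ₂ b / ψ p b) b))
        = (∫ b in Set.Iio x₀, ρ₁ b / ψ p b) - ∫ b in Set.Ioi x₀, ρ₂ b / ψ p b := by
      rw [MeasureTheory.integral_sub (hI1.indicator measurableSet_Iio)
        (hI2.indicator measurableSet_Ioi),
        MeasureTheory.integral_indicator measurableSet_Iio,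
        MeasureTheory.integral_indicator measurableSet_Ioi]
    have h2 := main.2
    rw [hval] at h2
    exact h2
  · -- Lipschitz
    refine Filter.Eventually.of_forall fun b => ?_
    rw [lipschitzOnWith_iff_dist_le_mul]
    intro x _ y _
    have e1 : |repu 1 (x-b) - repu 1 (y-b)| ≤ |x - y| := by
      simp only [repu, pow_one]
      have h := abs_max_sub_max_le_abs (x-b) (y-b) 0
      rwa [sub_sub_sub_cancel_right] at h
    have e2 : |repu 1 (b-x) - repu 1 (b-y)| ≤ |x - y| := by
      simp only [repu, pow_one]
      have h := abs_max_sub_max_le_abs (b-x) (b-y) 0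
      have h2 : b - x - (b - y) = y - x := by ring
      rw [h2, abs_sub_comm y x] at h
      exact h
    calc dist ((ρ₁ b * repu 1 (x - b) + 1 * (ρ₂ b * repu 1 (b - x))) / ψ p b)
          ((ρ₁ b * repu 1 (y - b) + 1 * (ρ₂ b * repu 1 (b - y))) / ψ p b)
        = |(ρ₁ b * (repu 1 (x-b) - repu 1 (y-b))
            + ρ₂ b * (repu 1 (b-x) - repu 1 (b-y))) / ψ p b| := by
          rw [Real.dist_eq]
          congr 1
          ring
      _ = |ρ₁ b * (repu 1 (x-b) - repu 1 (y-b))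
            + ρ₂ b * (repu 1 (b-x) - repu 1 (b-y))| / ψ p b := by
          rw [abs_div, abs_of_pos (psi_pos p b)]
      _ ≤ |ρ₁ b * (repu 1 (x-b) - repu 1 (y-b))
            + ρ₂ b * (repu 1 (b-x) - repu 1 (b-y))| :=
          div_le_self (abs_nonneg _) (psi_ge_one p b)
      _ ≤ |ρ₁ b| * |x-y| + |ρ₂ b| * |x-y| := by
          refine le_trans (abs_add_le _ _) (add_le_add ?_ ?_)
          · rw [abs_mul]
            exact mul_le_mul_of_nonneg_left e1 (abs_nonneg _)
          · rw [abs_mul]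
            exact mul_le_mul_of_nonneg_left e2 (abs_nonneg _)
      _ = (|ρ₁ b| + |ρ₂ b|) * |x - y| := by ring
      _ = ↑(Real.nnabs (|ρ₁ b| + |ρ₂ b|)) * dist x y := by
          rw [Real.coe_nnabs, abs_of_nonneg (show (0:ℝ) ≤ |ρ₁ b| + |ρ₂ b| by positivity), Real.dist_eq]
  · -- a.e. differentiability at x₀
    have hae : ∀ᵐ b : ℝ, b ≠ x₀ := by
      have h : ({x₀} : Set ℝ)ᶜ ∈ MeasureTheory.ae (volume : MeasureTheory.Measure ℝ) :=
        MeasureTheory.compl_mem_ae_iff.mpr (MeasureTheory.measure_singleton x₀)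
      filter_upwards [h] with b hb
      exact hb
    filter_upwards [hae] with b hb
    rcases lt_or_gt_of_ne hb with hlt | hgt
    · -- b < x₀
      have hev : (fun x => (ρ₁ b * repu 1 (x - b) + 1 * (ρ₂ b * repu 1 (b - x))) / ψ p b)
          =ᶠ[nhds x₀] (fun x => (ρ₁ b * (x - b)) / ψ p b) := by
        filter_upwards [Ioi_mem_nhds hlt] with x hx
        have hx' : b < x := Set.mem_Ioi.mp hx
        have r1 : repu 1 (x - b) = x - b := by
          simp [repu, max_eq_left (by linarith : (0:ℝ) ≤ x - b)]
        have r2 : repu 1 (b - x) = 0 := by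
          simp [repu, max_eq_right (by linarith : b - x ≤ (0:ℝ))]
        rw [r1, r2]
        ring
      have base : HasDerivAt (fun x => (ρ₁ b * (x - b)) / ψ p b) (ρ₁ b / ψ p b) x₀ := by
        have h := (((hasDerivAt_id x₀).sub_const b).const_mul (ρ₁ b)).div_const (ψ p b)
        exact h.congr_deriv (by ring)
      have hder := base.congr_of_eventuallyEq hev
      convert hder using 1
      rw [Set.indicator_of_mem (Set.mem_Iio.mpr hlt), Set.indicator_of_notMem
        (by simp [Set.mem_Ioi]; linarith)]
      ring
    · -- b > x₀
      have hev : (fun x => (ρ₁ b * repu 1 (x - b) + 1 * (ρ₂ b * repu 1 (b - x))) / ψ p b)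
          =ᶠ[nhds x₀] (fun x => (ρ₂ b * (b - x)) / ψ p b) := by
        filter_upwards [Iio_mem_nhds hgt] with x hx
        have hx' : x < b := Set.mem_Iio.mp hx
        have r1 : repu 1 (x - b) = 0 := by
          simp [repu, max_eq_right (by linarith : x - b ≤ (0:ℝ))]
        have r2 : repu 1 (b - x) = b - x := by
          simp [repu, max_eq_left (by linarith : (0:ℝ) ≤ b - x)]
        rw [r1, r2]
        ring
      have base : HasDerivAt (fun x => (ρ₂ b * (b - x)) / ψ p b) (-(ρ₂ b / ψ p b)) x₀ := by
        have h := ((((hasDerivAt_const x₀ b).sub (hasDerivAt_id x₀)).const_mul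
          (ρ₂ b)).div_const (ψ p b))
        exact h.congr_deriv (by ring)
      have hder := base.congr_of_eventuallyEq hev
      convert hder using 1
      rw [Set.indicator_of_notMem (by simp [Set.mem_Iio]; linarith),
        Set.indicator_of_mem (Set.mem_Ioi.mpr hgt)]
      ring

lemma tendsto_setInt_Iio_atTop {g : ℝ → ℝ} (hg : MeasureTheory.Integrable g) :
    Filter.Tendsto (fun x : ℝ => ∫ b in Set.Iio x, g b) Filter.atTop (nhds (∫ b, g b)) := by
  have heq : ∀ x : ℝ, ∫ b in Set.Iio x, g b = ∫ b, Set.indicator (Set.Iio x) g b := by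
    intro x
    rw [MeasureTheory.integral_indicator measurableSet_Iio]
  simp only [heq]
  refine MeasureTheory.tendsto_integral_filter_of_dominated_convergence (fun b => |g b|)
    (Filter.Eventually.of_forall fun x => hg.aestronglyMeasurable.indicator measurableSet_Iio)
    (Filter.Eventually.of_forall fun x => Filter.Eventually.of_forall fun b =>
      norm_indicator_le_norm_self g b)
    hg.abs ?_
  refine Filter.Eventually.of_forall fun b => ?_
  refine Filter.Tendsto.congr' ?_ tendsto_const_nhds
  filter_upwards [Filter.eventually_gt_atTop b] with x hx
  exact (Set.indicator_of_mem (Set.mem_Iio.mpr hx) g).symm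

lemma tendsto_setInt_Iio_atBot {g : ℝ → ℝ} (hg : MeasureTheory.Integrable g) :
    Filter.Tendsto (fun x : ℝ => ∫ b in Set.Iio x, g b) Filter.atBot (nhds 0) := by
  have heq : ∀ x : ℝ, ∫ b in Set.Iio x, g b = ∫ b, Set.indicator (Set.Iio x) g b := by
    intro x
    rw [MeasureTheory.integral_indicator measurableSet_Iio]
  simp only [heq]
  have h0 : (0:ℝ) = ∫ b : ℝ, (0:ℝ) := by simp
  rw [h0]
  refine MeasureTheory.tendsto_integral_filter_of_dominated_convergence (fun b => |g b|)
    (Filter.Eventually.of_forall fun x => hg.aestronglyMeasurable.indicator measurableSet_Iio)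
    (Filter.Eventually.of_forall fun x => Filter.Eventually.of_forall fun b =>
      norm_indicator_le_norm_self g b)
    hg.abs ?_
  refine Filter.Eventually.of_forall fun b => ?_
  refine Filter.Tendsto.congr' ?_ tendsto_const_nhds
  filter_upwards [Filter.eventually_lt_atBot b] with x hx
  exact (Set.indicator_of_notMem (by simp [Set.mem_Iio]; linarith) g).symm

lemma setInt_Ioi_eq {g : ℝ → ℝ} (hg : MeasureTheory.Integrable g) (x : ℝ) :
    ∫ b in Set.Ioi x, g b = (∫ b, g b) - ∫ b in Set.Iio x, g b := by
  have h := MeasureTheory.integral_add_compl (measurableSet_Iio : MeasurableSet (Set.Iio x)) hg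
  rw [Set.compl_Iio] at h
  have h2 : ∫ b in Set.Ici x, g b = ∫ b in Set.Ioi x, g b :=
    MeasureTheory.setIntegral_congr_set (MeasureTheory.Ioi_ae_eq_Ici).symm
  linarith [h, h2]

lemma hasDerivAt_primitive_Iio {g : ℝ → ℝ} (hg : MeasureTheory.Integrable g)
    (hc : Continuous g) (x₀ : ℝ) :
    HasDerivAt (fun x => ∫ b in Set.Iio x, g b) (g x₀) x₀ := by
  have hfe : ∀ x : ℝ, ∫ b in Set.Iio x, g b
      = (∫ b in Set.Iic (0:ℝ), g b) + ∫ t in (0:ℝ)..x, g t := by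
    intro x
    rw [← intervalIntegral.integral_Iic_sub_Iic hg.integrableOn hg.integrableOn]
    rw [MeasureTheory.setIntegral_congr_set (MeasureTheory.Iio_ae_eq_Iic)]
    ring
  have hd : HasDerivAt (fun x : ℝ => (∫ b in Set.Iic (0:ℝ), g b) + ∫ t in (0:ℝ)..x, g t)
      (g x₀) x₀ := by
    refine HasDerivAt.const_add _ ?_
    exact intervalIntegral.integral_hasDerivAt_right (hg.intervalIntegrable)
      (hc.stronglyMeasurableAtFilter volume (nhds x₀)) hc.continuousAt
  exact hd.congr_of_eventuallyEq (Filter.Eventually.of_forall hfe)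

end AuxStmt12

open Filter in
/-- for odd `p` and an admissible representation of `f`, the limits
`L₋, L₊` of `f^{(p)}` at `∓∞` exist and
`∫ (|ρ₁|+|ρ₋₁|)/ψ ≥ max( (1/p!)∫|f^{(p+1)}| , (1/p!)|L₋+L₊| )`. -/
theorem stmt_12 (p : ℕ) (hp : 1 ≤ p) (hodd : Odd p) (f ρ₁ ρ₂ : ℝ → ℝ) (c : ℝ)
    (hrep : IsAdmissibleRep p f ρ₁ ρ₂ c) :
    ∃ Lm Lp : ℝ,
      Tendsto (iteratedDeriv p f) atBot (nhds Lm) ∧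
      Tendsto (iteratedDeriv p f) atTop (nhds Lp) ∧
      (∫ b : ℝ, (|ρ₁ b| + |ρ₂ b|) / ψ p b) ≥
        max ((1 / (p.factorial : ℝ)) * ∫ b : ℝ, |iteratedDeriv (p + 1) f b|)
            ((1 / (p.factorial : ℝ)) * |Lm + Lp|) := by
  obtain ⟨hρ₁, hρ₂, ⟨C, hCpos, hC⟩, hf⟩ := hrep
  have hI1 : MeasureTheory.Integrable (fun b => ρ₁ b / ψ p b) :=
    integrable_rho_div hρ₁ (fun b => (hC b).1)
  have hI2 : MeasureTheory.Integrable (fun b => ρ₂ b / ψ p b) :=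
    integrable_rho_div hρ₂ (fun b => (hC b).2)
  have hfact_pos : (0:ℝ) < p.factorial := by exact_mod_cast p.factorial_pos
  -- iterated derivative formula up to p - 1
  have key : ∀ j, j ≤ p - 1 → ∃ κ : ℝ, iteratedDeriv j f
      = fun x => (p.descFactorial j : ℝ) * Gint p ρ₁ ρ₂ (p - j) ((-1:ℝ)^j) x + κ := by
    intro j
    induction j with
    | zero =>
      intro _
      refine ⟨c - Gint p ρ₁ ρ₂ p 1 0, ?_⟩
      funext x
      rw [iteratedDeriv_zero, hf x]
      have hsub : ∀ b : ℝ,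
          (ρ₁ b * (repu p (x - b) - repu p (-b)) + ρ₂ b * (repu p (b - x) - repu p b)) / ψ p b
          = (ρ₁ b * repu p (x - b) + 1 * (ρ₂ b * repu p (b - x))) / ψ p b
            - (ρ₁ b * repu p (0 - b) + 1 * (ρ₂ b * repu p (b - 0))) / ψ p b := by
        intro b
        rw [zero_sub, sub_zero]
        ring
      simp only [hsub]
      rw [MeasureTheory.integral_sub (integrable_integrand hρ₁ hρ₂ hC le_rfl 1 x)
        (integrable_integrand hρ₁ hρ₂ hC le_rfl 1 0)]
      simp only [Nat.descFactorial_zero, Nat.cast_one, pow_zero, Nat.sub_zero]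
      unfold Gint
      ring
    | succ j ih =>
      intro hj
      obtain ⟨κ, hκ⟩ := ih (by omega)
      have hk1 : 1 ≤ p - j - 1 := by omega
      have hkp : (p - j - 1) + 1 ≤ p := by omega
      have hpj : (p - j - 1) + 1 = p - j := by omega
      refine ⟨0, ?_⟩
      funext x
      rw [iteratedDeriv_succ, hκ]
      have hG : HasDerivAt (Gint p ρ₁ ρ₂ (p - j) ((-1:ℝ)^j))
          (((p - j : ℕ) : ℝ) * Gint p ρ₁ ρ₂ (p - j - 1) (-(-1:ℝ)^j) x) x := by
        have h := hasDerivAt_Gint hρ₁ hρ₂ hC hk1 hkp ((-1:ℝ)^j) x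
        rw [hpj, show ((p - j - 1 : ℕ):ℝ) + 1 = ((p - j : ℕ):ℝ) from by
          rw [← Nat.cast_add_one, hpj]] at h
        exact h
      have hd : HasDerivAt
          (fun x => (p.descFactorial j : ℝ) * Gint p ρ₁ ρ₂ (p - j) ((-1:ℝ)^j) x + κ)
          ((p.descFactorial j : ℝ)
            * (((p - j : ℕ) : ℝ) * Gint p ρ₁ ρ₂ (p - j - 1) (-(-1:ℝ)^j) x)) x :=
        (hG.const_mul _).add_const κ
      rw [hd.deriv]
      have h1 : p - (j+1) = p - j - 1 := by omega
      have h2 : ((-1:ℝ))^(j+1) = -(-1:ℝ)^j := by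
        rw [pow_succ]
        ring
      have h3 : (p.descFactorial (j+1) : ℝ) = ((p - j : ℕ) : ℝ) * (p.descFactorial j : ℝ) := by
        rw [Nat.descFactorial_succ]
        push_cast
        ring
      rw [h1, h2, h3]
      ring
  obtain ⟨κ, hκ⟩ := key (p - 1) le_rfl
  have hdesc : (p.descFactorial (p-1) : ℝ) = (p.factorial : ℝ) := by
    have h1 := Nat.descFactorial_self p
    have h2 := Nat.descFactorial_succ p (p-1)
    rw [show (p-1)+1 = p from by omega, show p - (p-1) = 1 from by omega, one_mul] at h2
    rw [← h2, h1]
  have hpp : p - (p - 1) = 1 := by omega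
  have hsig : ((-1:ℝ))^(p-1) = 1 := (Nat.Odd.sub_odd hodd odd_one).neg_one_pow
  rw [hpp, hsig, hdesc] at hκ
  -- p-th derivative
  have hDp : iteratedDeriv p f = fun x => (p.factorial : ℝ)
      * ((∫ b in Set.Iio x, ρ₁ b / ψ p b) - ∫ b in Set.Ioi x, ρ₂ b / ψ p b) := by
    funext x
    conv_lhs => rw [show p = (p - 1) + 1 from by omega]
    rw [iteratedDeriv_succ, hκ]
    exact (((hasDerivAt_Gint_one hp hρ₁ hρ₂ hC x).const_mul _).add_const κ).deriv
  -- limits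
  have hHtop : Tendsto (fun x => (∫ b in Set.Iio x, ρ₁ b / ψ p b)
      - ∫ b in Set.Ioi x, ρ₂ b / ψ p b) atTop (nhds (∫ b, ρ₁ b / ψ p b)) := by
    have h2 : Tendsto (fun x : ℝ => ∫ b in Set.Ioi x, ρ₂ b / ψ p b) atTop (nhds 0) := by
      simp only [setInt_Ioi_eq hI2]
      have h := (tendsto_const_nhds (x := (∫ b, ρ₂ b / ψ p b))).sub
        (tendsto_setInt_Iio_atTop hI2)
      simpa using h
    have h := (tendsto_setInt_Iio_atTop hI1).sub h2
    simpa using h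
  have hHbot : Tendsto (fun x => (∫ b in Set.Iio x, ρ₁ b / ψ p b)
      - ∫ b in Set.Ioi x, ρ₂ b / ψ p b) atBot (nhds (-(∫ b, ρ₂ b / ψ p b))) := by
    have h2 : Tendsto (fun x : ℝ => ∫ b in Set.Ioi x, ρ₂ b / ψ p b) atBot
        (nhds (∫ b, ρ₂ b / ψ p b)) := by
      simp only [setInt_Ioi_eq hI2]
      have h := (tendsto_const_nhds (x := (∫ b, ρ₂ b / ψ p b))).sub
        (tendsto_setInt_Iio_atBot hI2)
      simpa using h
    have h := (tendsto_setInt_Iio_atBot hI1).sub h2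
    simpa using h
  refine ⟨(p.factorial:ℝ) * (-(∫ b, ρ₂ b / ψ p b)), (p.factorial:ℝ) * (∫ b, ρ₁ b / ψ p b),
    ?_, ?_, ?_⟩
  · rw [hDp]
    exact hHbot.const_mul _
  · rw [hDp]
    exact hHtop.const_mul _
  · -- the inequality
    have hsum_int : MeasureTheory.Integrable (fun b => ρ₁ b / ψ p b + ρ₂ b / ψ p b) :=
      hI1.add hI2
    have hsum_cont : Continuous (fun b => ρ₁ b / ψ p b + ρ₂ b / ψ p b) :=
      (hρ₁.div (continuous_psi p) (fun b => (psi_pos p b).ne')).add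
        (hρ₂.div (continuous_psi p) (fun b => (psi_pos p b).ne'))
    have hHdEq : ∀ x : ℝ, (∫ b in Set.Iio x, ρ₁ b / ψ p b) - ∫ b in Set.Ioi x, ρ₂ b / ψ p b
        = (∫ b in Set.Iio x, (ρ₁ b / ψ p b + ρ₂ b / ψ p b)) - ∫ b, ρ₂ b / ψ p b := by
      intro x
      rw [setInt_Ioi_eq hI2 x,
        MeasureTheory.integral_add hI1.integrableOn hI2.integrableOn]
      ring
    have hD1 : ∀ x : ℝ, HasDerivAt (fun x => (∫ b in Set.Iio x, ρ₁ b / ψ p b)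
        - ∫ b in Set.Ioi x, ρ₂ b / ψ p b) (ρ₁ x / ψ p x + ρ₂ x / ψ p x) x := by
      intro x
      have hbase := (hasDerivAt_primitive_Iio hsum_int hsum_cont x).sub_const
        (∫ b, ρ₂ b / ψ p b)
      exact hbase.congr_of_eventuallyEq (Filter.Eventually.of_forall hHdEq)
    have hDp1 : ∀ x : ℝ, iteratedDeriv (p+1) f x
        = (p.factorial:ℝ) * (ρ₁ x / ψ p x + ρ₂ x / ψ p x) := by
      intro x
      rw [iteratedDeriv_succ, hDp]
      exact ((hD1 x).const_mul _).deriv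
    have hT_int : MeasureTheory.Integrable (fun b => (|ρ₁ b| + |ρ₂ b|) / ψ p b) := by
      refine integrable_master p (2*C) ?_ (fun b => ?_)
      · exact ((hρ₁.abs.add hρ₂.abs).div (continuous_psi p)
          (fun b => (psi_pos p b).ne')).aestronglyMeasurable
      · calc |(|ρ₁ b| + |ρ₂ b|) / ψ p b| = (|ρ₁ b| + |ρ₂ b|) / ψ p b := by
              rw [abs_div, abs_of_pos (psi_pos p b),
                abs_of_nonneg (show (0:ℝ) ≤ |ρ₁ b| + |ρ₂ b| by positivity)]
          _ ≤ |ρ₁ b| + |ρ₂ b| := div_le_self (by positivity) (psi_ge_one p b)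
          _ ≤ C * ((1+|b|)^p / (1+|b|^(p+2))) + C * ((1+|b|)^p / (1+|b|^(p+2))) :=
              add_le_add (rho_bound (fun b => (hC b).1) b) (rho_bound (fun b => (hC b).2) b)
          _ = 2*C * ((1+|b|)^p / (1+|b|^(p+2))) := by ring
    rw [ge_iff_le]
    refine max_le ?_ ?_
    · have habs : (fun b => |iteratedDeriv (p+1) f b|)
          = fun b => (p.factorial:ℝ) * |ρ₁ b / ψ p b + ρ₂ b / ψ p b| := by
        funext b
        rw [hDp1 b, abs_mul, abs_of_pos hfact_pos]
      rw [habs, MeasureTheory.integral_const_mul,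
        show (1/(p.factorial:ℝ)) * ((p.factorial:ℝ)
            * ∫ b, |ρ₁ b / ψ p b + ρ₂ b / ψ p b|) = ∫ b, |ρ₁ b / ψ p b + ρ₂ b / ψ p b| from by
          field_simp]
      refine MeasureTheory.integral_mono hsum_int.abs hT_int (fun b => ?_)
      have e : ρ₁ b / ψ p b + ρ₂ b / ψ p b = (ρ₁ b + ρ₂ b) / ψ p b := by ring
      rw [e, abs_div, abs_of_pos (psi_pos p b)]
      exact (div_le_div_iff_of_pos_right (psi_pos p b)).mpr (abs_add_le _ _)
    · have hA : (p.factorial:ℝ) * (-(∫ b, ρ₂ b / ψ p b))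
          + (p.factorial:ℝ) * (∫ b, ρ₁ b / ψ p b)
          = (p.factorial:ℝ) * ∫ b, (ρ₁ b / ψ p b - ρ₂ b / ψ p b) := by
        rw [MeasureTheory.integral_sub hI1 hI2]
        ring
      rw [hA, abs_mul, abs_of_pos hfact_pos,
        show (1/(p.factorial:ℝ)) * ((p.factorial:ℝ)
            * |∫ b, (ρ₁ b / ψ p b - ρ₂ b / ψ p b)|)
            = |∫ b, (ρ₁ b / ψ p b - ρ₂ b / ψ p b)| from by field_simp]
      calc |∫ b, (ρ₁ b / ψ p b - ρ₂ b / ψ p b)|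
          ≤ ∫ b, |ρ₁ b / ψ p b - ρ₂ b / ψ p b| := by
            simpa [Real.norm_eq_abs] using MeasureTheory.norm_integral_le_integral_norm
              (fun b => ρ₁ b / ψ p b - ρ₂ b / ψ p b)
        _ ≤ ∫ b, (|ρ₁ b| + |ρ₂ b|) / ψ p b := by
            refine MeasureTheory.integral_mono (hI1.sub hI2).abs hT_int (fun b => ?_)
            have e : ρ₁ b / ψ p b - ρ₂ b / ψ p b = (ρ₁ b - ρ₂ b) / ψ p b := by ring
            rw [e, abs_div, abs_of_pos (psi_pos p b)]
            exact (div_le_div_iff_of_pos_right (psi_pos p b)).mpr (abs_sub_le_abs_add_abs' _ _)
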